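/- Let λ ≥ 0, γ ≥ 0 with λ·γ < 1, and let z ∈ ℝⁿ satisfy z_1 ≥ z_2 ≥ … ≥ z_n ≥ 0. For any index i with 1 ≤ i ≤ n−1: if z_i ≤ h(i), then z_{i+1} ≤ h(i+1). -/
import Mathlib


open Finset

/-- The penalty `P_gamma(x) = gamma * (sum_{i<m} |x_i| |x_m|) + sum_i |x_i|` on R^n. -/
noncomputable def P (n : ℕ) (γ : ℝ) (x : Fin n → ℝ) : ℝ :=
  γ * (∑ i : Fin n, ∑ m ∈ Finset.Ioi i, |x i| * |x m|) + ∑ i : Fin n, |x i|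

/-- The candidate thresholds `h(i) = (lam(1-lam*gamma) + lam*gamma*(z_1+...+z_i)) / (1+(i-1)lam*gamma)`. -/
noncomputable def hfun (n : ℕ) (lam γ : ℝ) (z : Fin n → ℝ) (i : ℕ) : ℝ :=
  (lam * (1 - lam * γ) + lam * γ * ∑ m ∈ Finset.univ.filter (fun m : Fin n => (m : ℕ) < i), z m) /
    (1 + ((i : ℝ) - 1) * lam * γ)

/-- Lemma 1(b): if `z_i ≤ h(i)` then `z_{i+1} ≤ h(i+1)` (1-based indices). -/
theorem selectk_b (n : ℕ) (lam γ : ℝ) (hlam : 0 ≤ lam) (hγ : 0 ≤ γ)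
    (hlγ : lam * γ < 1) (z : Fin n → ℝ)
    (hsort : ∀ i j : Fin n, i ≤ j → z j ≤ z i) (hnn : ∀ i, 0 ≤ z i)
    (i : ℕ) (hi1 : 1 ≤ i) (hi2 : i < n)
    (h : z ⟨i - 1, by omega⟩ ≤ hfun n lam γ z i) :
    z ⟨i, hi2⟩ ≤ hfun n lam γ z (i + 1) := by
  have hD1 : (0:ℝ) < 1 + ((i : ℝ) - 1) * lam * γ := by
    have h1i : (1:ℝ) ≤ (i:ℝ) := by exact_mod_cast hi1
    nlinarith [mul_nonneg (mul_nonneg (by linarith : (0:ℝ) ≤ (i:ℝ) - 1) hlam) hγ]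
  have hD2 : (0:ℝ) < 1 + (((i : ℝ) + 1) - 1) * lam * γ := by
    have : (0:ℝ) ≤ (i:ℝ) * lam * γ := by positivity
    linarith
  set S := ∑ m ∈ Finset.univ.filter (fun m : Fin n => (m : ℕ) < i), z m with hS
  have hsum : ∑ m ∈ Finset.univ.filter (fun m : Fin n => (m : ℕ) < i + 1), z m
      = S + z ⟨i, hi2⟩ := by
    have hset : Finset.univ.filter (fun m : Fin n => (m : ℕ) < i + 1)
        = insert (⟨i, hi2⟩ : Fin n) (Finset.univ.filter (fun m : Fin n => (m : ℕ) < i)) := by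
      ext m
      simp only [Finset.mem_filter, Finset.mem_insert, Finset.mem_univ, true_and,
        Fin.ext_iff]
      omega
    rw [hset, Finset.sum_insert (by simp)]
    ring
  have h1 : z ⟨i - 1, by omega⟩ * (1 + ((i : ℝ) - 1) * lam * γ)
      ≤ lam * (1 - lam * γ) + lam * γ * S := by
    have := (le_div_iff₀ hD1).mp h
    simpa [hfun] using this
  have hmono : z ⟨i, hi2⟩ ≤ z ⟨i - 1, by omega⟩ := by
    apply hsort
    exact Fin.mk_le_mk.mpr (by omega)
  rw [hfun, hsum]
  push_cast
  rw [le_div_iff₀ hD2]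
  nlinarith [mul_le_mul_of_nonneg_right hmono (le_of_lt hD1)]
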